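/- arXiv:1101.4856 — 2 statements merged into one kernel-verified Lean document; each statement's English description precedes it below -/
import Mathlib

section
/- For a continuous function g : [0,1] → [0,∞), the kernel m_g(s,t) = inf_{r∈[s∧t,s∨t]} g(r) is nonnegative definite: for every n ≥ 1, every s_1, ..., s_n ∈ [0,1] and every λ_1, ..., λ_n ∈ ℝ, ∑_{i,j} λ_i λ_j m_g(s_i, s_j) ≥ 0. -/
/-!
Layer cake: for `m ≥ 0`, `m = ∫ 1{0 < t ≤ m} dt`, so the quadratic form is an integral over levels `t`.
At a fixed level, `t ≤ m_g(s_i, s_j)` is symmetric and, since `[s_i, s_j] ⊆ [s_i, s_k] ∪ [s_k, s_j]`,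
transitive. The indicator matrix of such a partial equivalence relation is a sum of squares
`∑_C (∑_{i ∈ C} λ_i)²` over its classes `C`.
-/

open Set

/-- `m_g(s,t) = inf_{r ∈ [s∧t, s∨t]} g(r)`. -/
noncomputable def mOf (g : ℝ → ℝ) (s t : ℝ) : ℝ := sInf (g '' Icc (min s t) (max s t))

section Finite

open Finset

lemma sum_sum_ite_comp_eq_nonneg {ι κ : Type*} [Fintype ι] [DecidableEq κ] (f : ι → κ)
    (a : ι → ℝ) : 0 ≤ ∑ i, ∑ j, if f i = f j then a i * a j else 0 := by
  set F : κ → ℝ := fun y => ∑ j with f j = y, a j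
  calc 0 ≤ ∑ y ∈ univ.image f, F y * F y := sum_nonneg fun y _ => mul_self_nonneg _
    _ = ∑ y ∈ univ.image f, ∑ i with f i = y, a i * F (f i) := by
      refine sum_congr rfl fun y _ => ?_
      rw [sum_mul]
      exact sum_congr rfl fun i hi => by rw [(mem_filter.1 hi).2]
    _ = ∑ i, a i * F (f i) :=
      sum_fiberwise_of_maps_to (fun i _ => mem_image_of_mem f (mem_univ i)) _
    _ = ∑ i, ∑ j, if f i = f j then a i * a j else 0 := by
      refine sum_congr rfl fun i _ => ?_
      simp only [F, mul_sum, sum_filter, mul_ite, mul_zero, eq_comm]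

lemma sum_sum_ite_rel_nonneg {ι : Type*} [Fintype ι] (R : ι → ι → Prop) [DecidableRel R]
    (hsymm : ∀ i j, R i j → R j i) (htrans : ∀ i j k, R i j → R j k → R i k) (a : ι → ℝ) :
    0 ≤ ∑ i, ∑ j, if R i j then a i * a j else 0 := by
  classical
  set c : ι → Finset ι := fun i => univ.filter (R i)
  have hR : ∀ i j, R i j ↔ R i i ∧ R j j ∧ c i = c j := by
    intro i j
    constructor
    · intro hij
      refine ⟨htrans _ _ _ hij (hsymm _ _ hij), htrans _ _ _ (hsymm _ _ hij) hij, ?_⟩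
      ext k
      simp only [c, mem_filter]
      exact and_congr_right fun _ => ⟨htrans _ _ _ (hsymm _ _ hij), htrans _ _ _ hij⟩
    · rintro ⟨hii, -, hc⟩
      have : i ∈ c j := hc ▸ by simpa [c] using hii
      exact hsymm _ _ (by simpa [c] using this)
  have := sum_sum_ite_comp_eq_nonneg c (fun i => if R i i then a i else 0)
  refine this.trans_eq (sum_congr rfl fun i _ => sum_congr rfl fun j _ => ?_)
  simp only [hR i j]
  by_cases hi : R i i <;> by_cases hj : R j j <;> simp [hi, hj]

end Finite

open MeasureTheory

lemma integral_indicator_Ioc_zero_one {x : ℝ} (hx : 0 ≤ x) :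
    ∫ t, (Ioc 0 x).indicator 1 t = x := by
  rw [integral_indicator_one measurableSet_Ioc, Real.volume_real_Ioc_of_le hx, sub_zero]

lemma integrable_indicator_Ioc_one (x y : ℝ) : Integrable ((Ioc x y).indicator (1 : ℝ → ℝ)) :=
  (integrable_indicator_iff measurableSet_Ioc).2 (integrableOn_const measure_Ioc_lt_top.ne)

lemma sum_sum_mul_nonneg_of_min_le {ι : Type*} [Fintype ι] (m : ι → ι → ℝ)
    (hsymm : ∀ i j, m i j = m j i) (hnonneg : ∀ i j, 0 ≤ m i j)
    (hmin : ∀ i j k, min (m i k) (m k j) ≤ m i j) (a : ι → ℝ) :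
    0 ≤ ∑ i, ∑ j, a i * a j * m i j := by
  have hlayer : ∀ i j, a i * a j * m i j = ∫ t, a i * a j * (Ioc 0 (m i j)).indicator 1 t :=
    fun i j => by rw [integral_const_mul, integral_indicator_Ioc_zero_one (hnonneg i j)]
  have hint : ∀ i j, Integrable fun t => a i * a j * (Ioc 0 (m i j)).indicator 1 t :=
    fun i j => (integrable_indicator_Ioc_one _ _).const_mul _
  have hform : ∑ i, ∑ j, a i * a j * m i j
      = ∫ t, ∑ i, ∑ j, a i * a j * (Ioc 0 (m i j)).indicator 1 t := by
    rw [integral_finsetSum _ fun i _ => integrable_finsetSum _ fun j _ => hint i j]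
    refine Finset.sum_congr rfl fun i _ => ?_
    rw [integral_finsetSum _ fun j _ => hint i j]
    exact Finset.sum_congr rfl fun j _ => hlayer i j
  rw [hform]
  refine integral_nonneg fun t => ?_
  have := sum_sum_ite_rel_nonneg (fun i j => t ∈ Ioc 0 (m i j))
    (fun i j h => hsymm i j ▸ h)
    (fun i k j hik hkj => ⟨hik.1, (le_min hik.2 hkj.2).trans (hmin i j k)⟩) a
  simpa [indicator_apply] using this

lemma mOf_eq_sInf_image_uIcc (g : ℝ → ℝ) (s t : ℝ) : mOf g s t = sInf (g '' uIcc s t) := rfl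

lemma mOf_comm (g : ℝ → ℝ) (s t : ℝ) : mOf g s t = mOf g t s := by
  rw [mOf_eq_sInf_image_uIcc, mOf_eq_sInf_image_uIcc, uIcc_comm]

section OrdConnected

variable {g : ℝ → ℝ} {I : Set ℝ} [I.OrdConnected] {s r t : ℝ}

lemma mOf_nonneg (hg : ∀ x ∈ I, 0 ≤ g x) (hs : s ∈ I) (ht : t ∈ I) : 0 ≤ mOf g s t :=
  Real.sInf_nonneg <| forall_mem_image.2 fun x hx => hg x (OrdConnected.uIcc_subset ‹_› hs ht hx)

lemma min_mOf_le_mOf (hg : BddBelow (g '' I)) (hs : s ∈ I) (hr : r ∈ I) (ht : t ∈ I) :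
    min (mOf g s r) (mOf g r t) ≤ mOf g s t := by
  have hbdd : ∀ {a b}, a ∈ I → b ∈ I → BddBelow (g '' uIcc a b) :=
    fun ha hb => hg.mono (image_mono (OrdConnected.uIcc_subset ‹_› ha hb))
  rw [mOf_eq_sInf_image_uIcc g s t]
  refine le_csInf (nonempty_uIcc.image g) (forall_mem_image.2 fun x hx => ?_)
  rcases uIcc_subset_uIcc_union_uIcc (b := r) hx with hx | hx
  · exact (min_le_left _ _).trans (csInf_le (hbdd hs hr) (mem_image_of_mem g hx))
  · exact (min_le_right _ _).trans (csInf_le (hbdd hr ht) (mem_image_of_mem g hx))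

end OrdConnected

theorem mOf_nonneg_definite_general (g : ℝ → ℝ)
    (hpos : ∀ t ∈ Icc (0 : ℝ) 1, 0 ≤ g t)
    (n : ℕ) (s : Fin n → ℝ) (hs : ∀ i, s i ∈ Icc (0 : ℝ) 1)
    (l : Fin n → ℝ) :
    0 ≤ ∑ i : Fin n, ∑ j : Fin n, l i * l j * mOf g (s i) (s j) :=
  sum_sum_mul_nonneg_of_min_le (fun i j => mOf g (s i) (s j))
    (fun i j => mOf_comm g (s i) (s j)) (fun i j => mOf_nonneg hpos (hs i) (hs j))
    (fun i j k => min_mOf_le_mOf ⟨0, forall_mem_image.2 hpos⟩ (hs i) (hs k) (hs j)) l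

/-- For a continuous `g : [0,1] → [0,∞)`, the kernel `m_g` is nonnegative definite:
for all `n ≥ 1`, `s₁, ..., s_n ∈ [0,1]` and `λ₁, ..., λ_n ∈ ℝ`,
`∑_{i,j} λ_i λ_j m_g(s_i, s_j) ≥ 0`. -/
theorem mOf_nonneg_definite (g : ℝ → ℝ)
    (hcont : ContinuousOn g (Icc 0 1)) (hpos : ∀ t ∈ Icc (0 : ℝ) 1, 0 ≤ g t)
    (n : ℕ) (hn : 1 ≤ n) (s : Fin n → ℝ) (hs : ∀ i, s i ∈ Icc (0 : ℝ) 1)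
    (l : Fin n → ℝ) :
    0 ≤ ∑ i : Fin n, ∑ j : Fin n, l i * l j * mOf g (s i) (s j) :=
  mOf_nonneg_definite_general g hpos n s hs l
end

section
/- Lower bound for distances in the CVS quadrangulation: with (q, v_*) obtained from a labeled tree (τ, ℓ) by the CVS bijection, for any two vertices u, v of q distinct from v_*, one has d_q(u, v) ≥ ℓ(u) + ℓ(v) − 2·min_{w ∈ [[u, v]]} ℓ(w), where [[u, v]] is the set of vertices on the unique geodesic path from u to v in the tree τ. -/
open scoped Classical

/-!
Extend `ℓ` to `v_*` by `min ℓ - 1`. The extended label changes by exactly one along every edge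
of `q`, so a geodesic from `u` to `v` through a vertex `z` has length at least
`ℓ u + ℓ v - 2 ℓ z`; it remains to find such a `z` with label at most `ℓ w`, where `w` has minimal
label on `[[u, v]]`. Otherwise the geodesic avoids `v_*` and stays strictly above `ℓ w`. Each of
its edges joins a corner to its successor, and the contour between the two never drops below the
successor's label, so these contour segments concatenate to a walk in `τ` from `u` to `v` avoiding
labels `≤ ℓ w`. In a tree such a walk visits every vertex of `[[u, v]]`, `w` included.
-/

namespace SimpleGraph

variable {V : Type*} {G : SimpleGraph V}

theorem Walk.abs_sub_le_length {f : V → ℤ} (hf : ∀ x y, G.Adj x y → |f x - f y| ≤ 1)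
    {x y : V} (W : G.Walk x y) : |f x - f y| ≤ W.length := by
  induction W with
  | nil => simp
  | @cons x y z h W ih =>
    rw [length_cons, Nat.cast_succ]
    linarith [abs_sub_le (f x) (f y) (f z), hf x y h]

theorem Walk.sub_add_sub_le_length {f : V → ℤ} (hf : ∀ x y, G.Adj x y → |f x - f y| ≤ 1)
    {x y z : V} (W : G.Walk x y) (hz : z ∈ W.support) : f x - f z + (f y - f z) ≤ W.length := by
  have hsplit := congrArg Walk.length (W.take_spec hz)
  rw [length_append] at hsplit
  have h₁ := (W.takeUntil z hz).abs_sub_le_length hf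
  have h₂ := (W.dropUntil z hz).abs_sub_le_length hf
  rw [← hsplit, Nat.cast_add]
  linarith [le_abs_self (f x - f z), neg_abs_le (f z - f y)]

def ReachableAbove (G : SimpleGraph V) (ℓ : V → ℤ) (m : ℤ) (a b : V) : Prop :=
  ∃ W : G.Walk a b, ∀ t ∈ W.support, m ≤ ℓ t

variable {ℓ : V → ℤ} {m : ℤ} {a b d : V}

theorem ReachableAbove.refl (ha : m ≤ ℓ a) : G.ReachableAbove ℓ m a a :=
  ⟨.nil, by simpa using ha⟩

theorem Adj.reachableAbove (h : G.Adj a b) (ha : m ≤ ℓ a) (hb : m ≤ ℓ b) :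
    G.ReachableAbove ℓ m a b :=
  ⟨.cons h .nil, by simp [ha, hb]⟩

theorem ReachableAbove.symm (h : G.ReachableAbove ℓ m a b) : G.ReachableAbove ℓ m b a := by
  obtain ⟨W, hW⟩ := h
  exact ⟨W.reverse, by simpa using hW⟩

theorem ReachableAbove.trans (h₁ : G.ReachableAbove ℓ m a b) (h₂ : G.ReachableAbove ℓ m b d) :
    G.ReachableAbove ℓ m a d := by
  obtain ⟨W₁, hW₁⟩ := h₁
  obtain ⟨W₂, hW₂⟩ := h₂
  refine ⟨W₁.append W₂, fun t ht => ?_⟩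
  rcases (W₁.mem_support_append_iff W₂).mp ht with ht | ht
  exacts [hW₁ t ht, hW₂ t ht]

-- In a forest every walk from `a` to `b` passes through every vertex of the path from `a` to `b`.
theorem IsAcyclic.le_of_reachableAbove (hG : G.IsAcyclic) (h : G.ReachableAbove ℓ m a b)
    {p : G.Walk a b} (hp : p.IsPath) {w : V} (hw : w ∈ p.support) : m ≤ ℓ w := by
  obtain ⟨W, hW⟩ := h
  have hpW : p = W.bypass :=
    congrArg Subtype.val ((hG.subsingleton_path a b).elim ⟨p, hp⟩ ⟨_, W.bypass_isPath⟩)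
  exact hW w (W.support_bypass_subset_support (hpW ▸ hw))

end SimpleGraph

theorem Function.Periodic.exists_gt_apply_eq {α : Type*} {c : ℕ → α} {N : ℕ}
    (hc : Function.Periodic c N) {a : α} (ha : ∃ i < N, c i = a) (k : ℕ) :
    ∃ t, k < t ∧ c t = a := by
  obtain ⟨i, hi, rfl⟩ := ha
  exact ⟨i + (k + 1) * N, by nlinarith, hc.nat_mul (k + 1) i⟩

theorem exists_eq_sub_one_of_lt {s : ℕ → ℤ} (hs : ∀ k, s k - 1 ≤ s (k + 1)) {i j : ℕ}
    (hij : i ≤ j) (hj : s j < s i) : ∃ k, i < k ∧ k ≤ j ∧ s k = s i - 1 := by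
  induction j, hij using Nat.le_induction with
  | base => exact absurd hj (lt_irrefl _)
  | succ j _ ih =>
    by_cases hlt : s j < s i
    · obtain ⟨k, hik, hkj, hk⟩ := ih hlt
      exact ⟨k, hik, by omega, hk⟩
    · exact ⟨j + 1, by omega, le_rfl, by linarith [hs j]⟩

namespace CVS

variable {α : Type*} (c : ℕ → α) (ℓ : α → ℤ)

def HasSucc (i : ℕ) : Prop := ∃ j, i < j ∧ ℓ (c j) = ℓ (c i) - 1

noncomputable def succIndex (i : ℕ) : ℕ := sInf {j | i < j ∧ ℓ (c j) = ℓ (c i) - 1}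

-- The CVS successor of corner `i`; `none` stands for `v_*`.
noncomputable def cvsSucc (i : ℕ) : Option α :=
  if HasSucc c ℓ i then some (c (succIndex c ℓ i)) else none

def cvsGraph : SimpleGraph (Option α) :=
  SimpleGraph.fromRel fun x y => ∃ i, x = some (c i) ∧ y = cvsSucc c ℓ i

-- With `a₀` of minimal label this is `d_q(·, v_*) + ℓ a₀ - 1`.
def extendLabel (a₀ : α) (z : Option α) : ℤ := z.elim (ℓ a₀ - 1) ℓ

variable {c ℓ}

theorem sub_one_le_label_succ {G : SimpleGraph α} (hadj : ∀ k, G.Adj (c k) (c (k + 1)))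
    (hlab : ∀ a b, G.Adj a b → |ℓ a - ℓ b| ≤ 1) (k : ℕ) : ℓ (c k) - 1 ≤ ℓ (c (k + 1)) := by
  linarith [(abs_le.mp (hlab _ _ (hadj k))).2]

theorem succIndex_spec {i : ℕ} (h : HasSucc c ℓ i) :
    i < succIndex c ℓ i ∧ ℓ (c (succIndex c ℓ i)) = ℓ (c i) - 1 :=
  Nat.sInf_mem h

theorem le_label_of_lt_succIndex (hstep : ∀ k, ℓ (c k) - 1 ≤ ℓ (c (k + 1))) {i k : ℕ}
    (hik : i ≤ k) (hk : k < succIndex c ℓ i) : ℓ (c i) ≤ ℓ (c k) := by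
  by_contra! hlt
  obtain ⟨k', hik', hk'k, hk'⟩ := exists_eq_sub_one_of_lt (s := fun k => ℓ (c k)) hstep hik hlt
  have : succIndex c ℓ i ≤ k' := Nat.sInf_le ⟨hik', hk'⟩
  omega

theorem le_of_not_hasSucc (hstep : ∀ k, ℓ (c k) - 1 ≤ ℓ (c (k + 1)))
    (hrec : ∀ a k, ∃ t, k < t ∧ c t = a) {i : ℕ} (h : ¬HasSucc c ℓ i) (a : α) :
    ℓ (c i) ≤ ℓ a := by
  by_contra! hlt
  obtain ⟨t, hit, rfl⟩ := hrec a i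
  obtain ⟨k, hik, -, hk⟩ := exists_eq_sub_one_of_lt (s := fun k => ℓ (c k)) hstep hit.le hlt
  exact h ⟨k, hik, hk⟩

theorem hasSucc_of_cvsSucc_eq_some {i : ℕ} {b : α} (h : cvsSucc c ℓ i = some b) :
    HasSucc c ℓ i ∧ c (succIndex c ℓ i) = b := by
  by_cases hs : HasSucc c ℓ i
  · simpa [cvsSucc, hs] using h
  · simp [cvsSucc, hs] at h

theorem label_of_cvsSucc_eq_some {i : ℕ} {b : α} (h : cvsSucc c ℓ i = some b) :
    ℓ b = ℓ (c i) - 1 := by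
  obtain ⟨hs, rfl⟩ := hasSucc_of_cvsSucc_eq_some h
  exact (succIndex_spec hs).2

theorem extendLabel_cvsSucc (hstep : ∀ k, ℓ (c k) - 1 ≤ ℓ (c (k + 1)))
    (hrec : ∀ a k, ∃ t, k < t ∧ c t = a) {a₀ : α} (ha₀ : ∀ a, ℓ a₀ ≤ ℓ a) (i : ℕ) :
    extendLabel ℓ a₀ (cvsSucc c ℓ i) = ℓ (c i) - 1 := by
  cases hs : cvsSucc c ℓ i with
  | some b => exact label_of_cvsSucc_eq_some hs
  | none =>
    have h : ¬HasSucc c ℓ i := fun h => by simp [cvsSucc, h] at hs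
    have hnone : extendLabel ℓ a₀ none = ℓ a₀ - 1 := rfl
    linarith [le_of_not_hasSucc hstep hrec h a₀, ha₀ (c i)]

theorem abs_extendLabel_sub_le_one (hstep : ∀ k, ℓ (c k) - 1 ≤ ℓ (c (k + 1)))
    (hrec : ∀ a k, ∃ t, k < t ∧ c t = a) {a₀ : α} (ha₀ : ∀ a, ℓ a₀ ≤ ℓ a) {x y : Option α}
    (h : (cvsGraph c ℓ).Adj x y) : |extendLabel ℓ a₀ x - extendLabel ℓ a₀ y| ≤ 1 := by
  rcases ((SimpleGraph.fromRel_adj _ _ _).mp h).2 with ⟨i, rfl, rfl⟩ | ⟨i, rfl, rfl⟩ <;>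
  · rw [extendLabel_cvsSucc hstep hrec ha₀]
    simp [extendLabel]

theorem some_adj_cvsSucc (i : ℕ) : (cvsGraph c ℓ).Adj (some (c i)) (cvsSucc c ℓ i) := by
  refine (SimpleGraph.fromRel_adj _ _ _).mpr ⟨fun h => ?_, .inl ⟨i, rfl, rfl⟩⟩
  have := label_of_cvsSucc_eq_some h.symm
  omega

theorem reachable_none (hc : Function.Surjective c) {a₀ : α} (ha₀ : ∀ a, ℓ a₀ ≤ ℓ a) (a : α) :
    (cvsGraph c ℓ).Reachable (some a) none := by
  suffices ∀ k : ℕ, ∀ i, ℓ (c i) < ℓ a₀ + k → (cvsGraph c ℓ).Reachable (some (c i)) none by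
    obtain ⟨i, rfl⟩ := hc a
    exact this (ℓ (c i) - ℓ a₀ + 1).toNat i (by omega)
  intro k
  induction k with
  | zero => exact fun i hi => absurd (ha₀ (c i)) (by omega)
  | succ k ih =>
    intro i hi
    have hadj := some_adj_cvsSucc (c := c) (ℓ := ℓ) i
    cases hs : cvsSucc c ℓ i with
    | none => exact (hs ▸ hadj).reachable
    | some b =>
      obtain ⟨j, rfl⟩ := hc b
      have := label_of_cvsSucc_eq_some hs
      exact (hs ▸ hadj).reachable.trans (ih j (by push_cast at hi; omega))

variable {G : SimpleGraph α}

theorem reachableAbove_contour (hadj : ∀ k, G.Adj (c k) (c (k + 1))) {m : ℤ} {i j : ℕ}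
    (hij : i ≤ j) (hm : ∀ k, i ≤ k → k ≤ j → m ≤ ℓ (c k)) :
    G.ReachableAbove ℓ m (c i) (c j) := by
  induction j, hij using Nat.le_induction with
  | base => exact .refl (hm i le_rfl le_rfl)
  | succ j hij ih =>
    exact (ih fun k hik hkj => hm k hik (by omega)).trans
      ((hadj j).reachableAbove (hm j hij (by omega)) (hm (j + 1) (by omega) le_rfl))

theorem reachableAbove_of_cvsSucc_eq_some (hstep : ∀ k, ℓ (c k) - 1 ≤ ℓ (c (k + 1)))
    (hadj : ∀ k, G.Adj (c k) (c (k + 1))) {i : ℕ} {b : α} (h : cvsSucc c ℓ i = some b)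
    {m : ℤ} (hm : m ≤ ℓ b) : G.ReachableAbove ℓ m (c i) b := by
  obtain ⟨hs, rfl⟩ := hasSucc_of_cvsSucc_eq_some h
  obtain ⟨hlt, hlabel⟩ := succIndex_spec hs
  refine reachableAbove_contour hadj hlt.le fun k hik hk => ?_
  rcases hk.lt_or_eq with hk | rfl
  · linarith [le_label_of_lt_succIndex hstep hik hk]
  · exact hm

theorem reachableAbove_of_adj (hstep : ∀ k, ℓ (c k) - 1 ≤ ℓ (c (k + 1)))
    (hadj : ∀ k, G.Adj (c k) (c (k + 1))) {a b : α} (h : (cvsGraph c ℓ).Adj (some a) (some b))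
    {m : ℤ} (ha : m ≤ ℓ a) (hb : m ≤ ℓ b) : G.ReachableAbove ℓ m a b := by
  rcases ((SimpleGraph.fromRel_adj _ _ _).mp h).2 with ⟨i, hi, hb'⟩ | ⟨i, hi, ha'⟩
  · obtain rfl := Option.some_injective _ hi
    exact reachableAbove_of_cvsSucc_eq_some hstep hadj hb'.symm hb
  · obtain rfl := Option.some_injective _ hi
    exact (reachableAbove_of_cvsSucc_eq_some hstep hadj ha'.symm ha).symm

theorem reachableAbove_of_walk (hstep : ∀ k, ℓ (c k) - 1 ≤ ℓ (c (k + 1)))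
    (hadj : ∀ k, G.Adj (c k) (c (k + 1))) {m : ℤ} {x y : Option α}
    (P : (cvsGraph c ℓ).Walk x y) (hP : ∀ z ∈ P.support, ∃ a ∈ z, m ≤ ℓ a) {a b : α}
    (ha : a ∈ x) (hb : b ∈ y) : G.ReachableAbove ℓ m a b := by
  induction P generalizing a with
  | nil =>
    obtain rfl := Option.mem_unique ha hb
    obtain ⟨a', ha', hm⟩ := hP _ (List.mem_singleton_self _)
    obtain rfl := Option.mem_unique ha ha'
    exact .refl hm
  | cons h P ih =>
    obtain ⟨a', ha', hm'⟩ := hP _ (List.mem_cons_of_mem _ P.start_mem_support)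
    obtain ⟨a'', ha'', hm⟩ := hP _ List.mem_cons_self
    obtain rfl := Option.mem_unique ha ha''
    rw [Option.mem_def] at ha ha'
    subst ha ha'
    exact (reachableAbove_of_adj hstep hadj h hm hm').trans
      (ih (fun z hz => hP z (List.mem_cons_of_mem _ hz)) rfl hb)

theorem exists_mem_support_extendLabel_le (hstep : ∀ k, ℓ (c k) - 1 ≤ ℓ (c (k + 1)))
    (hadj : ∀ k, G.Adj (c k) (c (k + 1))) (hG : G.IsAcyclic) {a₀ : α} (ha₀ : ∀ a, ℓ a₀ ≤ ℓ a)
    {u v : α} (P : (cvsGraph c ℓ).Walk (some u) (some v)) {p : G.Walk u v} (hp : p.IsPath)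
    {w : α} (hw : w ∈ p.support) : ∃ z ∈ P.support, extendLabel ℓ a₀ z ≤ ℓ w := by
  by_contra! hlow
  have hP : ∀ z ∈ P.support, ∃ a ∈ z, ℓ w + 1 ≤ ℓ a := by
    intro z hz
    cases z with
    | none =>
      have hnone : extendLabel ℓ a₀ none = ℓ a₀ - 1 := rfl
      linarith [hlow _ hz, ha₀ w]
    | some a => exact ⟨a, rfl, hlow _ hz⟩
  have := hG.le_of_reachableAbove (reachableAbove_of_walk hstep hadj P hP rfl rfl) hp hw
  omega

end CVS

open CVS in
theorem cvs_distance_lower_bound_general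
    {α : Type} [DecidableEq α]
    (n : ℕ) (G : SimpleGraph α) (hG : G.IsTree)
    (c : ℕ → α) (ℓ : α → ℤ)
    (hper : ∀ i, c (i + 2 * n) = c i)
    (hsurj : ∀ a : α, ∃ i < 2 * n, c i = a)
    (hadj : ∀ i, G.Adj (c i) (c (i + 1)))
    (hlab : ∀ a b, G.Adj a b → |ℓ a - ℓ b| ≤ 1)
    (Q : SimpleGraph (Option α))
    (hQ : Q = SimpleGraph.fromRel (fun x y => ∃ i : ℕ,
      x = some (c i) ∧
      y = (if h : ∃ j, i < j ∧ ℓ (c j) = ℓ (c i) - 1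
        then some (c (sInf {j | i < j ∧ ℓ (c j) = ℓ (c i) - 1}))
        else none))) :
    ∀ (u v : α) (p : G.Walk u v), p.IsPath →
      ℓ u + ℓ v - 2 * (p.support.toFinset.inf'
          ⟨u, List.mem_toFinset.mpr p.start_mem_support⟩ ℓ)
        ≤ (Q.dist (some u) (some v) : ℤ) := by
  intro u v p hp
  obtain rfl : Q = cvsGraph c ℓ := hQ
  have hstep := sub_one_le_label_succ hadj hlab
  have hrec : ∀ a k, ∃ t, k < t ∧ c t = a :=
    fun a => Function.Periodic.exists_gt_apply_eq hper (hsurj a)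
  have hc : Function.Surjective c := fun a => (hrec a 0).imp fun _ => And.right
  have : Finite α := Finite.of_surjective (fun i : Fin (2 * n) => c i) fun a =>
    let ⟨i, hi, hca⟩ := hsurj a; ⟨⟨i, hi⟩, hca⟩
  have : Nonempty α := ⟨u⟩
  obtain ⟨a₀, ha₀⟩ := Finite.exists_min ℓ
  obtain ⟨w, hw, hwmin⟩ :=
    Finset.exists_mem_eq_inf' ⟨u, List.mem_toFinset.mpr p.start_mem_support⟩ ℓ
  obtain ⟨P, hP⟩ :=
    ((reachable_none hc ha₀ u).trans (reachable_none hc ha₀ v).symm).exists_walk_length_eq_dist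
  obtain ⟨z, hz, hzw⟩ :=
    exists_mem_support_extendLabel_le hstep hadj hG.isAcyclic ha₀ P hp (List.mem_toFinset.mp hw)
  have hlen : ℓ u - extendLabel ℓ a₀ z + (ℓ v - extendLabel ℓ a₀ z) ≤ P.length :=
    P.sub_add_sub_le_length (fun _ _ => abs_extendLabel_sub_le_one hstep hrec ha₀) hz
  rw [hwmin, ← hP]
  linarith

/-- Lower bound for distances in the CVS quadrangulation. The plane tree `τ` is given as
a tree graph `G` on the vertex set `α`, with integer labels `ℓ` changing by at most `1`
along each tree edge, and with contour exploration `c` (a `2n`-periodic closed walk along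
the edges of `G` visiting every vertex). The quadrangulation `q` (vertex set
`τ ∪ {v_*}`, encoded as `Option α`) joins each corner to its successor, the first later
corner in contour order with label one less (or to `v_*` if none exists). Then for any
vertices `u, v` of `τ`, and the unique injective path `p` from `u` to `v` in the tree,
`d_q(u, v) ≥ ℓ(u) + ℓ(v) - 2 min_{w ∈ [[u,v]]} ℓ(w)`. -/
theorem cvs_distance_lower_bound
    {α : Type} [Fintype α] [DecidableEq α] [Nonempty α]
    (n : ℕ) (hn : 1 ≤ n) (G : SimpleGraph α) (hG : G.IsTree)
    (c : ℕ → α) (ℓ : α → ℤ)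
    (hper : ∀ i, c (i + 2 * n) = c i)
    (hsurj : ∀ a : α, ∃ i < 2 * n, c i = a)
    (hadj : ∀ i, G.Adj (c i) (c (i + 1)))
    (hlab : ∀ a b, G.Adj a b → |ℓ a - ℓ b| ≤ 1)
    (Q : SimpleGraph (Option α))
    (hQ : Q = SimpleGraph.fromRel (fun x y => ∃ i : ℕ,
      x = some (c i) ∧
      y = (if h : ∃ j, i < j ∧ ℓ (c j) = ℓ (c i) - 1
        then some (c (sInf {j | i < j ∧ ℓ (c j) = ℓ (c i) - 1}))
        else none))) :
    ∀ (u v : α) (p : G.Walk u v), p.IsPath →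
      ℓ u + ℓ v - 2 * (p.support.toFinset.inf'
          ⟨u, List.mem_toFinset.mpr p.start_mem_support⟩ ℓ)
        ≤ (Q.dist (some u) (some v) : ℤ) :=
  cvs_distance_lower_bound_general n G hG c ℓ hper hsurj hadj hlab Q hQ
end
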